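/- Let N ≥ 1, let 0 < δ < 1, and let (f_k)_{k ∈ ℕ} be a countable family of C^∞ maps ℝ^N → ℝ^N. Then there exists a real number γ with 0 ≤ γ ≤ δ such that for every k ∈ ℕ there is a point y ∈ ℝ^N with ‖y‖ = γ which is a regular value of f_k on the closed unit ball; that is, for every x with ‖x‖ ≤ 1 and f_k(x) = y, the Fréchet derivative D f_k(x) : ℝ^N → ℝ^N is surjective (equivalently, a linear isomorphism). (Here the sphere of radius 0 is understood to be the single point {0}.) -/

import Mathlib

open Set MeasureTheory Metric

/-- If the set of points of `ℝ^N` whose norm lies in `S ⊆ [c, δ]` (with `c > 0`) is contained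
in a measurable null set, then `S` itself is Lebesgue-null. -/
lemma radial_null (N : ℕ) (hN : 1 ≤ N) {c δ : ℝ} (hc : 0 < c) (S : Set ℝ)
    (hS : S ⊆ Set.Icc c δ) (Z : Set (EuclideanSpace ℝ (Fin N))) (hZm : MeasurableSet Z)
    (hZ0 : volume Z = 0)
    (hsub : ∀ x : EuclideanSpace ℝ (Fin N), ‖x‖ ∈ S → x ∈ Z) : volume S = 0 := by
  haveI : Nontrivial (EuclideanSpace ℝ (Fin N)) := by
    refine Module.nontrivial_of_finrank_pos (R := ℝ) ?_
    rw [finrank_euclideanSpace_fin]; omega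
  set μ : Measure (EuclideanSpace ℝ (Fin N)) := volume with hμ
  have h := μ.measurePreserving_homeomorphUnitSphereProd
  set n := Module.finrank ℝ (EuclideanSpace ℝ (Fin N)) - 1 with hn
  set ν : Measure (Ioi (0:ℝ)) := Measure.comap Subtype.val volume with hν
  set S' : Set (Ioi (0:ℝ)) := Subtype.val ⁻¹' S with hS'
  have memb := MeasurableEmbedding.subtype_coe (measurableSet_singleton (0:EuclideanSpace ℝ (Fin N))).compl
  -- Step 1: the product measure of `univ ×ˢ S'` vanishes
  have step1 : (μ.toSphere.prod (Measure.volumeIoiPow n)) (univ ×ˢ S') = 0 := by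
    have hmap : μ.toSphere.prod (Measure.volumeIoiPow n)
        = Measure.map (homeomorphUnitSphereProd (EuclideanSpace ℝ (Fin N))).toMeasurableEquiv (μ.comap (↑)) := by
      rw [← h.map_eq]; rfl
    rw [hmap, MeasurableEquiv.map_apply]
    have hsub2 : ⇑(homeomorphUnitSphereProd (EuclideanSpace ℝ (Fin N))).toMeasurableEquiv ⁻¹' (univ ×ˢ S')
        ⊆ (Subtype.val : ({0}ᶜ : Set (EuclideanSpace ℝ (Fin N))) → EuclideanSpace ℝ (Fin N)) ⁻¹' Z := by
      intro x hx
      have hx2 : ((homeomorphUnitSphereProd (EuclideanSpace ℝ (Fin N)) x).2 : ℝ) ∈ S := hx.2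
      have : ‖(x : EuclideanSpace ℝ (Fin N))‖ ∈ S := by simpa using hx2
      exact hsub _ this
    refine measure_mono_null hsub2 ?_
    rw [Measure.comap_apply _ Subtype.val_injective
      (fun s hs => memb.measurableSet_image' hs) _ (memb.measurable hZm)]
    refine measure_mono_null (t := Z) ?_ hZ0
    exact (Set.image_preimage_subset _ _)
  -- Step 2: `S'` is null for `volumeIoiPow n`
  have step2 : Measure.volumeIoiPow n S' = 0 := by
    rw [Measure.prod_prod] at step1
    rcases mul_eq_zero.1 step1 with h0 | h0
    · exfalso
      rw [μ.toSphere_apply_univ] at h0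
      refine mul_ne_zero ?_ ?_ h0
      · simp only [ne_eq, Nat.cast_eq_zero]
        have : Module.finrank ℝ (EuclideanSpace ℝ (Fin N)) = N := finrank_euclideanSpace_fin
        omega
      · exact (measure_ball_pos μ 0 one_pos).ne'
    · exact h0
  -- Step 3: lower bound `volumeIoiPow` by a multiple of `ν` on `[c, ∞)`
  have membI := MeasurableEmbedding.subtype_coe (measurableSet_Ioi (a := (0:ℝ)))
  have hIci : MeasurableSet ((Subtype.val : Ioi (0:ℝ) → ℝ) ⁻¹' Ici c) :=
    membI.measurable measurableSet_Ici
  have key : (ENNReal.ofReal (c ^ n)) • (ν.restrict (Subtype.val ⁻¹' Ici c))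
      ≤ Measure.volumeIoiPow n := by
    rw [Measure.le_iff]
    intro s hs
    rw [Measure.smul_apply, smul_eq_mul, Measure.restrict_apply hs]
    rw [Measure.volumeIoiPow, withDensity_apply _ hs]
    calc ENNReal.ofReal (c ^ n) * ν (s ∩ Subtype.val ⁻¹' Ici c)
        = ∫⁻ _ in s ∩ Subtype.val ⁻¹' Ici c, ENNReal.ofReal (c ^ n) ∂ν := by
          rw [setLIntegral_const, mul_comm]
      _ ≤ ∫⁻ x in s ∩ Subtype.val ⁻¹' Ici c, ENNReal.ofReal ((x : ℝ) ^ n) ∂ν := by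
          refine setLIntegral_mono ((measurable_subtype_coe.pow_const n).ennreal_ofReal) ?_
          intro x hx
          exact ENNReal.ofReal_le_ofReal (pow_le_pow_left₀ hc.le hx.2 n)
      _ ≤ ∫⁻ x in s, ENNReal.ofReal ((x : ℝ) ^ n) ∂ν :=
          lintegral_mono_set inter_subset_left
  have hS'sub : S' ⊆ Subtype.val ⁻¹' Ici c := fun x hx => (hS hx).1
  have step3 : ν S' = 0 := by
    have := Measure.le_iff'.1 key S'
    rw [step2, nonpos_iff_eq_zero, Measure.smul_apply, smul_eq_mul,
      Measure.restrict_apply' hIci, inter_eq_self_of_subset_left hS'sub] at this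
    rcases mul_eq_zero.1 this with h0 | h0
    · exact absurd h0 (by
        simp only [ne_eq, ENNReal.ofReal_eq_zero, not_le]
        positivity)
    · exact h0
  -- Step 4: conclude
  have himg : (Subtype.val : Ioi (0:ℝ) → ℝ) '' S' = S := by
    rw [Subtype.image_preimage_coe]
    exact inter_eq_self_of_subset_right (fun x hx => lt_of_lt_of_le hc (hS hx).1)
  refine le_antisymm ?_ zero_le
  calc volume S = volume ((Subtype.val : Ioi (0:ℝ) → ℝ) '' S') := by rw [himg]
    _ ≤ ν S' := Measure.le_comap_apply _ _ Subtype.val_injective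
          (fun s hs => (membI.measurableSet_image' hs).nullMeasurableSet) _
    _ = 0 := step3

/-- Regular values on the disc: given a countable family of smooth maps
`f k : ℝ^N → ℝ^N`, there is a radius `0 ≤ γ ≤ δ` such that for every `k` some point
of norm `γ` is a regular value of `f k` on the closed unit ball. -/
theorem exists_sphere_of_regular_values
    (N : ℕ) (hN : 1 ≤ N) (δ : ℝ) (hδ0 : 0 < δ) (hδ1 : δ < 1)
    (f : ℕ → EuclideanSpace ℝ (Fin N) → EuclideanSpace ℝ (Fin N))
    (hf : ∀ k, ContDiff ℝ (⊤ : ℕ∞) (f k)) :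
    ∃ γ : ℝ, 0 ≤ γ ∧ γ ≤ δ ∧
      ∀ k : ℕ, ∃ y : EuclideanSpace ℝ (Fin N), ‖y‖ = γ ∧
        ∀ x : EuclideanSpace ℝ (Fin N), ‖x‖ ≤ 1 → f k x = y →
          Function.Surjective ⇑(fderiv ℝ (f k) x) := by
  set Crit : ℕ → Set (EuclideanSpace ℝ (Fin N)) := fun k =>
    f k '' {x : EuclideanSpace ℝ (Fin N) | ‖x‖ ≤ 1 ∧ ¬ Function.Surjective ⇑(fderiv ℝ (f k) x)} with hCrit
  -- Sard's lemma in equal dimensions: the critical values form a null set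
  have hCnull : ∀ k, volume (Crit k) = 0 := by
    intro k
    refine addHaar_image_eq_zero_of_det_fderivWithin_eq_zero (μ := volume)
      (f' := fun x => fderiv ℝ (f k) x) ?_ ?_
    · intro x _
      exact (((hf k).differentiable (by simp)) x).hasFDerivAt.hasFDerivWithinAt
    · rintro x ⟨-, hxs⟩
      by_contra hd
      exact hxs ((fderiv ℝ (f k) x).toLinearMap.equivOfDetNeZero hd).surjective
  set Z : ℕ → Set (EuclideanSpace ℝ (Fin N)) := fun k => toMeasurable volume (Crit k) with hZ
  have hZm : ∀ k, MeasurableSet (Z k) := fun k => measurableSet_toMeasurable _ _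
  have hZ0 : ∀ k, volume (Z k) = 0 := fun k => by
    rw [hZ]; rw [measure_toMeasurable]; exact hCnull k
  have hCZ : ∀ k, Crit k ⊆ Z k := fun k => subset_toMeasurable _ _
  set c : ℝ := δ / 2 with hc
  have hc0 : 0 < c := by positivity
  have hcδ : c < δ := by rw [hc]; linarith
  set Bad : ℕ → Set ℝ := fun k => {r : ℝ | r ∈ Set.Icc c δ ∧ ∀ y : EuclideanSpace ℝ (Fin N), ‖y‖ = r → y ∈ Z k}
    with hBad
  have hBadNull : ∀ k, volume (Bad k) = 0 := by
    intro k
    refine radial_null N hN hc0 (Bad k) (fun r hr => hr.1) (Z k) (hZm k) (hZ0 k) ?_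
    intro x hx
    exact hx.2 x rfl
  have hUnion : volume (⋃ k, Bad k) = 0 := measure_iUnion_null hBadNull
  have hIcc : volume (Set.Icc c δ) ≠ 0 := by
    rw [Real.volume_Icc]
    simp only [ne_eq, ENNReal.ofReal_eq_zero, not_le]
    linarith
  have hex : ∃ γ, γ ∈ Set.Icc c δ ∧ γ ∉ ⋃ k, Bad k := by
    by_contra hcon
    push_neg at hcon
    exact hIcc (measure_mono_null (fun r hr => hcon r hr) hUnion)
  obtain ⟨γ, hγI, hγB⟩ := hex
  refine ⟨γ, le_trans hc0.le hγI.1, hγI.2, fun k => ?_⟩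
  have : γ ∉ Bad k := fun hb => hγB (Set.mem_iUnion.2 ⟨k, hb⟩)
  rw [hBad] at this
  simp only [Set.mem_setOf_eq, not_and, not_forall] at this
  obtain ⟨y, hy, hyZ⟩ := this hγI
  refine ⟨y, hy, fun x hx hfx => ?_⟩
  by_contra hns
  exact hyZ (hCZ k ⟨x, ⟨hx, hns⟩, hfx⟩)
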